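/- Let V be a finite-dimensional real vector space, K ⊆ V a closed convex cone, and L ⊆ V a linear subspace. If K ∩ L is a linear subspace of V, then the Minkowski sum K + L is closed. -/

import Mathlib

/-!
Let `M = K ∩ L` and let `M'` be a complement of `M`. Since `K + M ⊆ K`, we have
`K + L = K' + L` for the closed cone `K' = K ∩ M'`, which meets `L` only in `0`. By compactness of
the unit sphere of `K'`, its points keep a distance `c > 0` from `L`, so `c ‖k‖ ≤ ‖k + l‖`. Hence
the bounded part of `K' + L` lies in (bounded part of `K'`) + `L`, a compact set plus a closed one.
-/

open Pointwise Metric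

theorem Convex.add_mem_of_smul_mem {𝕜 E : Type*} [Field 𝕜] [LinearOrder 𝕜]
    [IsStrictOrderedRing 𝕜] [AddCommGroup E] [Module 𝕜 E] {K : Set E} (hconv : Convex 𝕜 K)
    (hcone : ∀ (c : 𝕜), 0 ≤ c → ∀ x ∈ K, c • x ∈ K) {x y : E} (hx : x ∈ K) (hy : y ∈ K) :
    x + y ∈ K := by
  have hmid := hcone 2 zero_le_two _ (hconv hx hy (by positivity) (by positivity) (add_halves 1))
  convert hmid using 1
  module

theorem isClosed_add_of_mul_norm_le_norm_add {V : Type*} [NormedAddCommGroup V] [ProperSpace V]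
    {K L : Set V} (hK : IsClosed K) (hL : IsClosed L) {c : ℝ} (hc : 0 < c)
    (hbound : ∀ k ∈ K, ∀ l ∈ L, c * ‖k‖ ≤ ‖k + l‖) : IsClosed (K + L) := by
  refine closure_subset_iff_isClosed.mp fun z hz => ?_
  set R := ‖z‖ + 1
  have hbounded : (K + L) ∩ ball 0 R ⊆ (K ∩ closedBall 0 (R / c)) + L := by
    rintro _ ⟨⟨k, hk, l, hl, rfl⟩, hkl⟩
    refine ⟨k, ⟨hk, ?_⟩, l, hl, rfl⟩
    rw [mem_closedBall_zero_iff, le_div_iff₀ hc, mul_comm]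
    exact (hbound k hk l hl).trans (mem_ball_zero_iff.mp hkl).le
  have hclosed : IsClosed ((K ∩ closedBall 0 (R / c)) + L) :=
    hL.add_left_of_isCompact ((isCompact_closedBall 0 _).inter_left hK)
  have hzR : z ∈ ball (0 : V) R := by simp [R]
  have hzloc : z ∈ closure ((K + L) ∩ ball 0 R) := by
    simpa only [Set.inter_comm] using isOpen_ball.inter_closure ⟨hzR, hz⟩
  exact Set.add_subset_add_right Set.inter_subset_left
    (hclosed.closure_subset_iff.mpr hbounded hzloc)

section

variable {V : Type*} [NormedAddCommGroup V] [NormedSpace ℝ V]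

theorem exists_pos_mul_norm_le_norm_add [ProperSpace V] {K : Set V} (hK : IsClosed K)
    (hKcone : ∀ (c : ℝ), 0 ≤ c → ∀ x ∈ K, c • x ∈ K) {L : Submodule ℝ V}
    (hL : IsClosed (L : Set V)) (hKL : K ∩ L ⊆ {0}) :
    ∃ c > 0, ∀ k ∈ K, ∀ l ∈ L, c * ‖k‖ ≤ ‖k + l‖ := by
  have hS : IsCompact (K ∩ sphere 0 1) := (isCompact_sphere 0 1).inter_left hK
  have hpos : ∀ u ∈ K ∩ sphere 0 1, 0 < infDist u L := by
    rintro u ⟨huK, hu⟩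
    refine (hL.notMem_iff_infDist_pos ⟨0, L.zero_mem⟩).mp fun huL => ?_
    rw [hKL ⟨huK, huL⟩, mem_sphere_zero_iff_norm, norm_zero] at hu
    exact zero_ne_one hu
  obtain ⟨c, hc, hcS⟩ :=
    hS.exists_forall_le' (continuous_infDist_pt (L : Set V)).continuousOn hpos
  refine ⟨c, hc, fun k hk l hl => ?_⟩
  rcases eq_or_ne k 0 with rfl | hk0
  · simp
  have hnk : 0 < ‖k‖ := norm_pos_iff.mpr hk0
  have hu : ‖k‖⁻¹ • k ∈ K ∩ sphere 0 1 :=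
    ⟨hKcone _ (inv_nonneg.mpr hnk.le) k hk, by simp [norm_smul, hnk.ne']⟩
  have hdist : infDist (‖k‖⁻¹ • k) L ≤ ‖k‖⁻¹ * ‖k + l‖ := by
    calc infDist (‖k‖⁻¹ • k) L ≤ dist (‖k‖⁻¹ • k) (-(‖k‖⁻¹ • l)) :=
          infDist_le_dist_of_mem (L.neg_mem (L.smul_mem _ hl))
      _ = ‖k‖⁻¹ * ‖k + l‖ := by
          rw [dist_eq_norm, sub_neg_eq_add, ← smul_add, norm_smul, norm_inv, norm_norm]
  rw [mul_comm, ← le_inv_mul_iff₀ hnk]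
  exact (hcS _ hu).trans hdist

theorem add_eq_inter_add_of_isCompl {K : Set V} (hKadd : ∀ x ∈ K, ∀ y ∈ K, x + y ∈ K)
    {L M M' : Submodule ℝ V} (hM : (M : Set V) = K ∩ L) (hM' : IsCompl M M') :
    K + (L : Set V) = K ∩ M' + L := by
  refine subset_antisymm ?_ (Set.add_subset_add_right Set.inter_subset_left)
  rintro _ ⟨a, ha, b, hb, rfl⟩
  obtain ⟨m, hm, p, hp, rfl⟩ :=
    Submodule.mem_sup.mp (hM'.sup_eq_top ▸ Submodule.mem_top (x := a))
  have hmKL : -m ∈ K ∩ L := hM ▸ M.neg_mem hm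
  have hpK : p ∈ K := by simpa using hKadd _ ha _ hmKL.1
  refine ⟨p, ⟨hpK, hp⟩, m + b, L.add_mem (by simpa using hmKL.2) hb, by dsimp only; abel⟩

theorem inter_isCompl_inter_subset_zero {K : Set V} {L M M' : Submodule ℝ V}
    (hM : (M : Set V) = K ∩ L) (hM' : IsCompl M M') : K ∩ M' ∩ L ⊆ {0} := by
  rintro v ⟨⟨hvK, hvM'⟩, hvL⟩
  have hvM : v ∈ M := by rw [← SetLike.mem_coe, hM]; exact ⟨hvK, hvL⟩
  have hvMM' : v ∈ M ⊓ M' := ⟨hvM, hvM'⟩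
  simpa [hM'.inf_eq_bot] using hvMM'

end

theorem dieudonne_cone_plus_subspace_closed_general
    (V : Type*) [NormedAddCommGroup V] [NormedSpace ℝ V] [FiniteDimensional ℝ V]
    (K : Set V) (hKclosed : IsClosed K) (hKconv : Convex ℝ K)
    (hKcone : ∀ (c : ℝ), 0 ≤ c → ∀ x ∈ K, c • x ∈ K)
    (L : Submodule ℝ V)
    (hKL : ∃ M : Submodule ℝ V, (M : Set V) = K ∩ (L : Set V)) :
    IsClosed (K + (L : Set V)) := by
  obtain ⟨M, hM⟩ := hKL
  obtain ⟨M', hM'⟩ := M.exists_isCompl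
  have hKadd : ∀ x ∈ K, ∀ y ∈ K, x + y ∈ K :=
    fun x hx y hy => hKconv.add_mem_of_smul_mem hKcone hx hy
  rw [add_eq_inter_add_of_isCompl hKadd hM hM']
  have hK'closed : IsClosed (K ∩ M') := hKclosed.inter M'.closed_of_finiteDimensional
  have hK'cone : ∀ (c : ℝ), 0 ≤ c → ∀ x ∈ K ∩ M', c • x ∈ K ∩ M' :=
    fun c hc x hx => ⟨hKcone c hc x hx.1, M'.smul_mem c hx.2⟩
  obtain ⟨c, hc, hbound⟩ := exists_pos_mul_norm_le_norm_add hK'closed hK'cone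
    L.closed_of_finiteDimensional (inter_isCompl_inter_subset_zero hM hM')
  exact isClosed_add_of_mul_norm_le_norm_add hK'closed L.closed_of_finiteDimensional hc hbound

theorem dieudonne_cone_plus_subspace_closed
    (V : Type*) [NormedAddCommGroup V] [NormedSpace ℝ V] [FiniteDimensional ℝ V]
    (K : Set V) (hKclosed : IsClosed K) (hKconv : Convex ℝ K) (hK0 : (0 : V) ∈ K)
    (hKcone : ∀ (c : ℝ), 0 ≤ c → ∀ x ∈ K, c • x ∈ K)
    (L : Submodule ℝ V)
    (hKL : ∃ M : Submodule ℝ V, (M : Set V) = K ∩ (L : Set V)) :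
    IsClosed (K + (L : Set V)) :=
  dieudonne_cone_plus_subspace_closed_general V K hKclosed hKconv hKcone L hKL
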